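/- arXiv:0907.3332 — 2 statements merged into one kernel-verified Lean document; each statement's English description precedes it below -/
import Mathlib

section
/- Let F and G be lattice filters of an MV-algebra L with F ⊆ G⁺. Then Martinez' function Φ(F, G) = ⋃_{f ∈ F} {y ∈ L | f → y ∈ G} satisfies Φ(F, G) = (F ⊸ G⁺)⁺. -/
/-- An MV-algebra: a commutative monoid `(L, ⊕, 0)` with a unary `¬` satisfying
`¬¬x = x`, `x ⊕ ¬0 = ¬0` and `¬(¬x ⊕ y) ⊕ y = ¬(¬y ⊕ x) ⊕ x`. -/
class MV (L : Type*) where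
  add : L → L → L
  zero : L
  neg : L → L
  add_assoc : ∀ x y z : L, add (add x y) z = add x (add y z)
  add_comm : ∀ x y : L, add x y = add y x
  add_zero : ∀ x : L, add x zero = x
  neg_neg : ∀ x : L, neg (neg x) = x
  add_neg_zero : ∀ x : L, add x (neg zero) = neg zero
  luk : ∀ x y : L, add (neg (add (neg x) y)) y = add (neg (add (neg y) x)) x

namespace MV

variable {L : Type*} [MV L]

/-- `1 = ¬0`. -/
def one : L := neg zero

/-- `x → y = ¬x ⊕ y`. -/
def imp (x y : L) : L := add (neg x) y

/-- `x ⊗ y = ¬(¬x ⊕ ¬y)`. -/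
def otimes (x y : L) : L := neg (add (neg x) (neg y))

/-- `x ∨ y = (x → y) → y`. -/
def join (x y : L) : L := imp (imp x y) y

/-- `x ∧ y = ¬(¬x ∨ ¬y)`. -/
def meet (x y : L) : L := neg (join (neg x) (neg y))

/-- `x ≤ y` iff `x → y = 1`. -/
def le (x y : L) : Prop := imp x y = one

/-- `x < y` iff `x ≤ y` and `x ≠ y`. -/
def lt (x y : L) : Prop := le x y ∧ x ≠ y

/-- A lattice filter: nonempty, upward closed, closed under `∧`. -/
def IsLatticeFilter (F : Set L) : Prop :=
  F.Nonempty ∧ (∀ x y : L, x ∈ F → le x y → y ∈ F) ∧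
    (∀ x y : L, x ∈ F → y ∈ F → meet x y ∈ F)

/-- A prime lattice filter: a proper lattice filter such that
`x ∨ y ∈ F` implies `x ∈ F` or `y ∈ F`. -/
def IsPrimeFilter (F : Set L) : Prop :=
  IsLatticeFilter F ∧ F ≠ Set.univ ∧ ∀ x y : L, join x y ∈ F → x ∈ F ∨ y ∈ F

/-- `F ⊸ G = {z | ∀ a ∉ G, z → a ∉ F}` (intended for `F ⊆ G`). -/
def lolli (F G : Set L) : Set L := {z | ∀ a ∉ G, imp z a ∉ F}

/-- The general `F ⊸ G = (F ∩ G) ⊸ G`. -/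
def lolli' (F G : Set L) : Set L := lolli (F ∩ G) G

/-- The kernel `K(F) = {z | ∀ a ∉ F, z → a ∉ F}`. -/
def ker (F : Set L) : Set L := {z | ∀ a ∉ F, imp z a ∉ F}

/-- `F⁺ = {z | ¬z ∉ F}`. -/
def plus (F : Set L) : Set L := {z | neg z ∉ F}

/-- An implication filter: contains `1` and is closed under modus ponens. -/
def IsImplicationFilter (P : Set L) : Prop :=
  (one : L) ∈ P ∧ ∀ x y : L, x ∈ P → imp x y ∈ P → y ∈ P

/-- `x ~_P y` iff `x → y ∈ P` and `y → x ∈ P`. -/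
def simP (P : Set L) (x y : L) : Prop := imp x y ∈ P ∧ imp y x ∈ P

/-- `J_u(F, P) = {z | ∃ f ∈ F, z ~_P f}`. -/
def Ju (F P : Set L) : Set L := {z | ∃ f ∈ F, simP P z f}

/-- `J_d(F, P) = (J_u(F⁺, P))⁺`. -/
def Jd (F P : Set L) : Set L := plus (Ju (plus F) P)

end MV

/-!
Unfolding the definitions, `y ∈ (F ⊸ G⁺)⁺` says that some `a` has `¬a ∈ G` and `¬y → a ∈ F`.
Given `f ∈ F` with `f → y ∈ G`, take `a = ¬(f → y)`: then `¬y → a = f ∨ y ≥ f`.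
Conversely, take `f = ¬y → a`: then `f → y = ¬a ∨ y ≥ ¬a`.
-/

namespace MV

variable {L : Type*} [MV L]

theorem neg_add_self (x : L) : add (neg x) x = one := by
  have h := luk x (one : L)
  rw [show add (neg x) (one : L) = one from add_neg_zero (neg x),
    show (neg one : L) = zero from neg_neg zero, add_comm zero x, add_zero,
    add_comm zero one, add_zero] at h
  exact h.symm

theorem le_join_left (x y : L) : le x (join x y) := by
  unfold le join imp
  rw [luk x y, ← add_assoc, add_comm (neg x), add_assoc, neg_add_self]
  exact add_neg_zero _

theorem imp_neg_neg_imp (f y : L) : imp (neg y) (neg (imp f y)) = join f y := by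
  unfold join imp
  rw [neg_neg, add_comm y]

theorem imp_neg_imp (a y : L) : imp (imp (neg y) a) y = join (neg a) y := by
  unfold join imp
  rw [neg_neg, neg_neg, add_comm y a]

theorem IsLatticeFilter.join_mem {F : Set L} (hF : IsLatticeFilter F) {x : L} (hx : x ∈ F)
    (y : L) : join x y ∈ F :=
  hF.2.1 x _ hx (le_join_left x y)

theorem mem_plus_lolli_plus_of_imp_mem {F : Set L} (hF : IsLatticeFilter F) {G : Set L}
    {f y : L} (hf : f ∈ F) (hfy : imp f y ∈ G) : y ∈ plus (lolli F (plus G)) := by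
  intro hy
  refine hy (neg (imp f y)) (fun h => h ?_) ?_
  · rwa [neg_neg]
  · rw [imp_neg_neg_imp]
    exact hF.join_mem hf y

theorem exists_imp_mem_of_mem_plus_lolli_plus {F G : Set L} (hG : IsLatticeFilter G) {y : L}
    (hy : y ∈ plus (lolli F (plus G))) : ∃ f ∈ F, imp f y ∈ G := by
  simp only [plus, lolli, Set.mem_ofPred_eq, not_forall, not_not, exists_prop] at hy
  obtain ⟨a, ha, hya⟩ := hy
  refine ⟨imp (neg y) a, hya, ?_⟩
  rw [imp_neg_imp]
  exact hG.join_mem ha y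

end MV

open MV
theorem stmt_9_general {L : Type*} [MV L] (F G : Set L)
    (hF : IsLatticeFilter F) (hG : IsLatticeFilter G) :
    (⋃ f ∈ F, {y : L | imp f y ∈ G}) = plus (lolli F (plus G)) := by
  ext y
  simp only [Set.mem_iUnion, Set.mem_ofPred_eq, exists_prop]
  exact ⟨fun ⟨_, hf, hfy⟩ => mem_plus_lolli_plus_of_imp_mem hF hf hfy,
    exists_imp_mem_of_mem_plus_lolli_plus hG⟩

/-- For lattice filters `F ⊆ G⁺`,
`Φ(F, G) = ⋃_{f ∈ F} {y | f → y ∈ G} = (F ⊸ G⁺)⁺`. -/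
theorem stmt_9 {L : Type*} [MV L] (F G : Set L)
    (hF : IsLatticeFilter F) (hG : IsLatticeFilter G) (hFG : F ⊆ plus G) :
    (⋃ f ∈ F, {y : L | imp f y ∈ G}) = plus (lolli F (plus G)) :=
  stmt_9_general F G hF hG
end

section
/- Let F ⊆ G be prime lattice filters of an MV-algebra L. Then F ⊸ G = J_u(F, K(G)) ⊸ J_d(G, K(F)). -/
/-! Inclusion `⊇`: `F` lies in both `J_u(F, K(G))` and `J_d(G, K(F))`, while `J_d(G, K(F)) ⊆ G`.
Inclusion `⊆`: if `z ∈ F ⊸ G`, `z → a ~_{K(G)} f ∈ F` and `¬a ~_{K(F)} g` with `¬g ∉ G`, then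
pushing `¬g ∉ G` through `K(G)`, `z ∈ F ⊸ G` and `K(F)` yields an element of the complement of `F`
above `f`. -/

namespace MV

variable {L : Type*} [MV L]

instance : Std.Associative (add : L → L → L) := ⟨MV.add_assoc⟩

instance : Std.Commutative (add : L → L → L) := ⟨MV.add_comm⟩

theorem neg_one : neg (one : L) = zero := MV.neg_neg zero

theorem add_one (x : L) : add x one = one := add_neg_zero x

theorem one_imp (x : L) : imp one x = x := by
  rw [imp, neg_one, MV.add_comm, MV.add_zero]

theorem add_neg_self (x : L) : add x (neg x) = one := by
  have h := luk one x
  rwa [neg_one, MV.add_comm zero, MV.add_zero, add_one, MV.add_comm] at h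

theorem imp_self (x : L) : imp x x = one := by
  rw [imp, MV.add_comm, add_neg_self]

theorem imp_neg_comm (x y : L) : imp x (neg y) = imp y (neg x) := MV.add_comm _ _

theorem add_add_neg_add_add (x y : L) : add x (add (neg (add x y)) y) = one := by
  have h := luk (neg x) y
  rw [MV.neg_neg] at h
  rw [h, ← MV.add_assoc, MV.add_comm x, MV.add_assoc, add_neg_self, add_one]

theorem le_imp_imp_self (x y : L) : le x (imp (imp x y) y) := add_add_neg_add_add (neg x) y

/-- Read with `⊗`: `f ⊗ (f → (z → a)) ⊗ z ⊗ (a → b) ≤ b`, two modus ponens steps and one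
transitivity step. -/
theorem le_imp_imp_imp_imp (f z a b : L) :
    le f (imp (imp a b) (imp z (imp (imp f (imp z a)) b))) := by
  show add (neg f) (add (neg (add (neg a) b))
    (add (neg z) (add (neg (add (neg f) (add (neg z) a))) b))) = one
  calc _ = add (add (neg (add (neg a) b)) b)
          (add (add (neg f) (neg z)) (neg (add (add (neg f) (neg z)) a))) := by ac_rfl
    _ = add (neg (add (neg b) a))
          (add (add (neg f) (neg z)) (add (neg (add (add (neg f) (neg z)) a)) a)) := by
        rw [luk]; ac_rfl
    _ = one := by rw [add_add_neg_add_add, add_one]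

def IsUpClosed (F : Set L) : Prop := ∀ x y : L, x ∈ F → le x y → y ∈ F

theorem IsLatticeFilter.isUpClosed {F : Set L} (hF : IsLatticeFilter F) : IsUpClosed F :=
  hF.2.1

variable {F G P : Set L}

theorem one_mem_ker (F : Set L) : (one : L) ∈ ker F := fun a ha => by rwa [one_imp]

theorem subset_Ju (hP : (one : L) ∈ P) : F ⊆ Ju F P :=
  fun x hx => ⟨x, hx, by rwa [imp_self], by rwa [imp_self]⟩

theorem Jd_subset (hP : (one : L) ∈ P) : Jd G P ⊆ G := by
  intro x hx
  by_contra hxG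
  exact hx (subset_Ju hP (show neg (neg x) ∉ G by rwa [MV.neg_neg]))

theorem mem_of_imp_mem_ker (hF : IsUpClosed F) {x y : L} (hx : x ∈ F) (hxy : imp x y ∈ ker F) :
    y ∈ F := by
  by_contra hy
  exact hxy y hy (hF _ _ hx (le_imp_imp_self x y))

theorem subset_Jd_ker (hF : IsUpClosed F) (hFG : F ⊆ G) : F ⊆ Jd G (ker F) := by
  rintro x hx ⟨g, hg, -, hgx⟩
  rw [← imp_neg_comm] at hgx
  exact hg (hFG (mem_of_imp_mem_ker hF hx hgx))

theorem mem_of_mem_lolli (hF : IsUpClosed F) {z a b : L} (hz : z ∈ lolli F G)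
    (hza : imp z a ∈ Ju F (ker G)) (hab : imp a b ∈ ker F) : b ∈ G := by
  obtain ⟨f, hf, -, hfza⟩ := hza
  by_contra hb
  have h1 : imp (imp f (imp z a)) b ∉ G := hfza b hb
  have h2 : imp z (imp (imp f (imp z a)) b) ∉ F := hz _ h1
  exact hab _ h2 (hF _ _ hf (le_imp_imp_imp_imp f z a b))

theorem lolli_subset_lolli' (hF : IsUpClosed F) :
    lolli F G ⊆ lolli' (Ju F (ker G)) (Jd G (ker F)) := by
  rintro z hz a ha ⟨hza, -⟩
  obtain ⟨g, hg, -, hga⟩ := not_not.mp ha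
  rw [imp_neg_comm] at hga
  exact hg (mem_of_mem_lolli hF hz hza hga)

theorem lolli'_subset_lolli (hF : IsUpClosed F) (hFG : F ⊆ G) :
    lolli' (Ju F (ker G)) (Jd G (ker F)) ⊆ lolli F G :=
  fun _ hz c hc hzc => hz c (fun h => hc (Jd_subset (one_mem_ker F) h))
    ⟨subset_Ju (one_mem_ker G) hzc, subset_Jd_ker hF hFG hzc⟩

end MV

open MV

theorem stmt_13_general {L : Type*} [MV L] (F G : Set L)
    (hF : IsPrimeFilter F) (hFG : F ⊆ G) :
    lolli F G = lolli' (Ju F (ker G)) (Jd G (ker F)) :=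
  (lolli_subset_lolli' hF.1.isUpClosed).antisymm (lolli'_subset_lolli hF.1.isUpClosed hFG)

/-- For prime lattice filters `F ⊆ G`,
`F ⊸ G = J_u(F, K(G)) ⊸ J_d(G, K(F))`. -/
theorem stmt_13 {L : Type*} [MV L] (F G : Set L)
    (hF : IsPrimeFilter F) (hG : IsPrimeFilter G) (hFG : F ⊆ G) :
    lolli F G = lolli' (Ju F (ker G)) (Jd G (ker F)) :=
  stmt_13_general F G hF hFG
end
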